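/- arXiv:1810.07954 — 5 statements merged into one kernel-verified Lean document; each statement's English description precedes it below -/
import Mathlib

section
/- Let x_1, ..., x_t be real numbers whose overall average a satisfies a ≥ (1/c)∑_{k=1}^c x_k for all 1 ≤ c ≤ t (a dominates all prefix averages). Let 1 ≤ i_1 < i_2 < ... < i_t be integers with i_c ≥ c for each c. Then ∑_{c=1}^t (i_c − c)(x_c − a) ≥ 0. -/
/-! Summation by parts turns the sum into `w t * P t - ∑ c < t, (w (c+1) - w c) * P c`, where
`P c` is the prefix sum of the deviations `x k - a` and `w c = i c - c`. Here `P t = 0`, every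
`P c ≤ 0` by the prefix-average hypothesis, and `w` is nondecreasing because `i` is strictly
increasing. -/

open Finset

theorem mul_sum_Icc_le_sum_Icc_mul {R : Type*} [CommRing R] [PartialOrder R] [IsOrderedRing R]
    (w d : ℕ → R) (n : ℕ) (hw : ∀ c, 1 ≤ c → c < n → w c ≤ w (c + 1))
    (hd : ∀ c ≤ n, ∑ k ∈ Icc 1 c, d k ≤ 0) :
    w n * ∑ k ∈ Icc 1 n, d k ≤ ∑ k ∈ Icc 1 n, w k * d k := by
  induction n with
  | zero => simp
  | succ n ih =>
    have ih := ih (fun c hc hcn => hw c hc (by omega)) (fun c hc => hd c (by omega))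
    have hstep : 0 ≤ (w (n + 1) - w n) * -∑ k ∈ Icc 1 n, d k := by
      rcases n.eq_zero_or_pos with rfl | hn
      · simp
      · exact mul_nonneg (sub_nonneg.2 (hw n hn (by omega))) (neg_nonneg.2 (hd n (by omega)))
    rw [sum_Icc_succ_top (by omega), sum_Icc_succ_top (by omega)]
    linear_combination ih + hstep

theorem sum_Icc_sub_const (x : ℕ → ℝ) (a : ℝ) (c : ℕ) :
    ∑ k ∈ Icc 1 c, (x k - a) = ∑ k ∈ Icc 1 c, x k - c * a := by
  simp [sum_sub_distrib]

theorem sum_Icc_sub_nonpos_of_div_le {x : ℕ → ℝ} {a : ℝ} {c : ℕ}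
    (h : (∑ k ∈ Icc 1 c, x k) / c ≤ a) : ∑ k ∈ Icc 1 c, (x k - a) ≤ 0 := by
  rcases c.eq_zero_or_pos with rfl | hc
  · simp
  · rw [div_le_iff₀ (by exact_mod_cast hc)] at h
    rw [sum_Icc_sub_const]
    linarith

theorem sum_Icc_sub_div_eq_zero (x : ℕ → ℝ) (t : ℕ) :
    ∑ k ∈ Icc 1 t, (x k - (∑ k ∈ Icc 1 t, x k) / t) = 0 := by
  rcases t.eq_zero_or_pos with rfl | ht
  · simp
  · rw [sum_Icc_sub_const]
    field_simp
    ring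

theorem weighted_deviation_nonneg_general (t : ℕ) (x : ℕ → ℝ) (a : ℝ)
    (ha : a = (∑ k ∈ Finset.Icc 1 t, x k) / t)
    (hpre : ∀ c, 1 ≤ c → c ≤ t → (∑ k ∈ Finset.Icc 1 c, x k) / c ≤ a)
    (i : ℕ → ℕ)
    (hmono : ∀ c c', 1 ≤ c → c < c' → c' ≤ t → i c < i c') :
    0 ≤ ∑ c ∈ Finset.Icc 1 t, ((i c : ℝ) - c) * (x c - a) := by
  have hprefix : ∀ c ≤ t, ∑ k ∈ Icc 1 c, (x k - a) ≤ 0 := fun c hct => by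
    rcases c.eq_zero_or_pos with rfl | hc
    · simp
    · exact sum_Icc_sub_nonpos_of_div_le (hpre c hc hct)
  have htotal : ∑ k ∈ Icc 1 t, (x k - a) = 0 := ha ▸ sum_Icc_sub_div_eq_zero x t
  have hweights : ∀ c, 1 ≤ c → c < t → (i c : ℝ) - c ≤ (i (c + 1) : ℝ) - (c + 1 : ℕ) :=
    fun c hc hct => by
      have : i c + 1 ≤ i (c + 1) := hmono c (c + 1) hc (by omega) (by omega)
      push_cast
      linarith [(by exact_mod_cast this : (i c : ℝ) + 1 ≤ i (c + 1))]
  calc (0 : ℝ) = ((i t : ℝ) - t) * ∑ k ∈ Icc 1 t, (x k - a) := by rw [htotal, mul_zero]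
    _ ≤ _ := mul_sum_Icc_le_sum_Icc_mul (fun c => (i c : ℝ) - c) (fun k => x k - a) t
        hweights hprefix

theorem weighted_deviation_nonneg (t : ℕ) (x : ℕ → ℝ) (a : ℝ) (ht : 1 ≤ t)
    (ha : a = (∑ k ∈ Finset.Icc 1 t, x k) / t)
    (hpre : ∀ c, 1 ≤ c → c ≤ t → (∑ k ∈ Finset.Icc 1 c, x k) / c ≤ a)
    (i : ℕ → ℕ)
    (hi1 : 1 ≤ i 1)
    (hmono : ∀ c c', 1 ≤ c → c < c' → c' ≤ t → i c < i c')
    (hic : ∀ c, 1 ≤ c → c ≤ t → c ≤ i c) :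
    0 ≤ ∑ c ∈ Finset.Icc 1 t, ((i c : ℝ) - c) * (x c - a) :=
  weighted_deviation_nonneg_general t x a ha hpre i hmono
end

section
/- Let X_1, ..., X_t and Z_1, ..., Z_{n−t} be real numbers with a = (1/t)∑ X_k, and suppose: (i) a dominates all prefix averages of X (a ≥ (1/c)∑_{k=1}^c X_k for 1 ≤ c ≤ t), and (ii) every prefix average of Z is at most a ((1/j)∑_{k=1}^j Z_k ≤ a for 1 ≤ j ≤ n−t). Consider any interleaving of the X-sequence and Z-sequence that preserves the internal order of each. Then the eAUC objective ∑_{k=1}^n (n−k+1)·w_k of the interleaved sequence w is at most that of the sequence (X_1,...,X_t, Z_1,...,Z_{n−t}) which places all X's first. -/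
/-!
Let `e c` and `f j` be the positions of `X c` and `Z j` in `w`, and let `m c` be the number of
`Z`'s placed before `X c`. Then `e c = c + m c`, and the `Z`'s before `X c` are exactly
`Z 1, …, Z (m c)`. Passing to the order with all `X`'s first, `X c` moves up by `m c` places and
`Z j` moves down by the number of `X`'s after it, so the gain in eAUC is
`∑ c, m c * X c - ∑ c, (Z 1 + ⋯ + Z (m c))`. By (ii) the subtracted part is at most
`a * ∑ c, m c`; and since `m` is nondecreasing while the prefix sums of `X - a` are nonpositive
and vanish at `t`, Abel summation gives `∑ c, m c * (X c - a) ≥ 0`.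
-/

open Finset

theorem filter_Icc_eq_Icc_card {N : ℕ} {p : ℕ → Prop} [DecidablePred p]
    (hp : ∀ i j, 1 ≤ i → i ≤ j → j ≤ N → p j → p i) :
    {j ∈ Icc 1 N | p j} = Icc 1 #{j ∈ Icc 1 N | p j} := by
  refine eq_of_subset_of_card_le (fun i hi => ?_) (by simp)
  have hsub : Icc 1 i ⊆ {j ∈ Icc 1 N | p j} := fun j hj => by
    simp only [mem_filter, mem_Icc] at hi hj ⊢
    exact ⟨⟨hj.1, hj.2.trans hi.1.2⟩, hp j i hj.1 hj.2 hi.1.2 hi.2⟩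
  have hcard := card_le_card hsub
  simp only [mem_filter, mem_Icc, Nat.card_Icc] at hi hcard ⊢
  omega

theorem sum_card_filter_mul_eq_sum_sum {α β R : Type*} [NonAssocSemiring R] {S : Finset α}
    {T : Finset β} (P : β → α → Prop) [∀ c j, Decidable (P c j)] (Z : α → R) :
    ∑ j ∈ S, (#{c ∈ T | P c j} : R) * Z j = ∑ c ∈ T, ∑ j ∈ S with P c j, Z j := by
  simp_rw [← nsmul_eq_mul, ← sum_const]
  exact sum_comm' fun j c => by simp only [mem_filter]; tauto

theorem mul_sum_le_sum_mul_of_monotoneOn {t : ℕ} {m Y : ℕ → ℝ}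
    (hm : MonotoneOn m (Set.Icc 1 t)) (hY : ∀ c < t, ∑ k ∈ Icc 1 c, Y k ≤ 0) :
    m t * ∑ k ∈ Icc 1 t, Y k ≤ ∑ k ∈ Icc 1 t, m k * Y k := by
  induction t with
  | zero => simp
  | succ t ih =>
    rw [sum_Icc_succ_top (by omega), sum_Icc_succ_top (by omega)]
    have ih' := ih (hm.mono (Set.Icc_subset_Icc_right (by omega))) fun c hc => hY c (by omega)
    rcases Nat.eq_zero_or_pos t with rfl | ht
    · simp
    · have hmt : m t ≤ m (t + 1) := hm ⟨ht, by omega⟩ ⟨by omega, le_rfl⟩ (by omega)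
      nlinarith [mul_nonneg_of_nonpos_of_nonpos (sub_nonpos.mpr hmt) (hY t (by omega))]

theorem sum_Icc_le_mul_of_div_le {N : ℕ} {Z : ℕ → ℝ} {a : ℝ}
    (h : ∀ j, 1 ≤ j → j ≤ N → (∑ k ∈ Icc 1 j, Z k) / j ≤ a) {j : ℕ} (hj : j ≤ N) :
    ∑ k ∈ Icc 1 j, Z k ≤ j * a := by
  rcases Nat.eq_zero_or_pos j with rfl | hj0
  · simp
  · rw [← div_le_iff₀' (by exact_mod_cast hj0)]
    exact h j hj0 hj

theorem sum_sum_Icc_le_sum_mul {t s : ℕ} {X Z : ℕ → ℝ} {a : ℝ} {m : ℕ → ℕ}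
    (hm : MonotoneOn m (Set.Icc 1 t)) (hms : ∀ c ∈ Icc 1 t, m c ≤ s)
    (hX : ∀ c < t, ∑ k ∈ Icc 1 c, X k ≤ c * a) (hXt : ∑ k ∈ Icc 1 t, X k = t * a)
    (hZ : ∀ j ≤ s, ∑ k ∈ Icc 1 j, Z k ≤ j * a) :
    ∑ c ∈ Icc 1 t, ∑ k ∈ Icc 1 (m c), Z k ≤ ∑ c ∈ Icc 1 t, m c * X c := by
  have hprefix : ∀ c, ∑ k ∈ Icc 1 c, (X k - a) = ∑ k ∈ Icc 1 c, X k - c * a := fun c => by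
    rw [sum_sub_distrib, sum_const, Nat.card_Icc, Nat.add_sub_cancel, nsmul_eq_mul]
  have habel := mul_sum_le_sum_mul_of_monotoneOn (Y := fun k => X k - a)
    (fun c hc c' hc' hcc' => Nat.cast_le.mpr (hm hc hc' hcc')) fun c hc => by
      rw [hprefix]; linarith [hX c hc]
  rw [hprefix, hXt, sub_self, mul_zero] at habel
  calc ∑ c ∈ Icc 1 t, ∑ k ∈ Icc 1 (m c), Z k ≤ ∑ c ∈ Icc 1 t, (m c : ℝ) * a :=
        sum_le_sum fun c hc => hZ (m c) (hms c hc)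
    _ ≤ ∑ c ∈ Icc 1 t, m c * X c := by
        simp only [mul_sub, sum_sub_distrib] at habel
        linarith

section Interleaving

variable {n t s : ℕ} {e f : ℕ → ℕ}

theorem sum_Icc_eq_sum_add_sum_of_interleave {M : Type*} [AddCommMonoid M]
    (hpart : (Icc 1 t).image e ∪ (Icc 1 s).image f = Icc 1 n)
    (hdisj : Disjoint ((Icc 1 t).image e) ((Icc 1 s).image f))
    (he : Set.InjOn e (Set.Icc 1 t)) (hf : Set.InjOn f (Set.Icc 1 s)) (g : ℕ → M) :
    ∑ k ∈ Icc 1 n, g k = ∑ c ∈ Icc 1 t, g (e c) + ∑ j ∈ Icc 1 s, g (f j) := by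
  rw [← coe_Icc] at he hf
  rw [← hpart, sum_union hdisj, sum_image he, sum_image hf]

theorem card_filter_lt_add_card_filter_lt
    (hpart : (Icc 1 t).image e ∪ (Icc 1 s).image f = Icc 1 n)
    (hdisj : Disjoint ((Icc 1 t).image e) ((Icc 1 s).image f))
    (he : Set.InjOn e (Set.Icc 1 t)) (hf : Set.InjOn f (Set.Icc 1 s)) {k : ℕ} (hk : k ≤ n + 1) :
    #{c ∈ Icc 1 t | e c < k} + #{j ∈ Icc 1 s | f j < k} = k - 1 := by
  rw [← coe_Icc] at he hf
  have hlt : {x ∈ Icc 1 n | x < k} = Icc 1 (k - 1) := by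
    ext x
    simp only [mem_filter, mem_Icc]
    omega
  have hcount := congrArg (fun S => #{x ∈ S | x < k}) hpart
  rwa [filter_union, card_union_of_disjoint (disjoint_filter_filter hdisj), filter_image,
    filter_image, card_image_of_injOn (he.mono (filter_subset _ _)),
    card_image_of_injOn (hf.mono (filter_subset _ _)), hlt, Nat.card_Icc,
    Nat.add_sub_cancel] at hcount

theorem card_filter_lt_of_strictMonoOn (he : StrictMonoOn e (Set.Icc 1 t)) {c : ℕ}
    (hc : c ∈ Icc 1 t) : #{x ∈ Icc 1 t | e x < e c} = c - 1 := by
  rw [mem_Icc] at hc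
  have hIcc : {x ∈ Icc 1 t | e x < e c} = Icc 1 (c - 1) := by
    ext x
    simp only [mem_filter, mem_Icc]
    constructor
    · rintro ⟨hx, hlt⟩
      have := (he.lt_iff_lt hx hc).mp hlt
      omega
    · intro hx
      exact ⟨⟨hx.1, by omega⟩, he ⟨hx.1, by omega⟩ hc (by omega)⟩
  rw [hIcc, Nat.card_Icc, Nat.add_sub_cancel]

theorem eq_add_card_filter_lt (hpart : (Icc 1 t).image e ∪ (Icc 1 s).image f = Icc 1 n)
    (hdisj : Disjoint ((Icc 1 t).image e) ((Icc 1 s).image f))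
    (he : StrictMonoOn e (Set.Icc 1 t)) (hf : Set.InjOn f (Set.Icc 1 s)) {c : ℕ}
    (hc : c ∈ Icc 1 t) : e c = c + #{j ∈ Icc 1 s | f j < e c} := by
  have hec : e c ∈ Icc 1 n := hpart ▸ mem_union_left _ (mem_image_of_mem e hc)
  rw [mem_Icc] at hec
  have hcount := card_filter_lt_add_card_filter_lt hpart hdisj he.injOn hf (k := e c) (by omega)
  rw [card_filter_lt_of_strictMonoOn he hc] at hcount
  rw [mem_Icc] at hc
  omega

theorem add_card_filter_gt (hpart : (Icc 1 t).image e ∪ (Icc 1 s).image f = Icc 1 n)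
    (hdisj : Disjoint ((Icc 1 t).image e) ((Icc 1 s).image f))
    (he : Set.InjOn e (Set.Icc 1 t)) (hf : StrictMonoOn f (Set.Icc 1 s)) {j : ℕ}
    (hj : j ∈ Icc 1 s) : f j + #{c ∈ Icc 1 t | f j < e c} = t + j := by
  have hfj := eq_add_card_filter_lt (by rwa [union_comm] at hpart) hdisj.symm hf he hj
  have hne : ∀ c ∈ Icc 1 t, e c ≠ f j := fun c hc h =>
    disjoint_left.mp hdisj (mem_image_of_mem e hc) (h ▸ mem_image_of_mem f hj)
  have hsplit := card_filter_add_card_filter_not (s := Icc 1 t) (fun c => e c < f j)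
  rw [filter_congr (p := fun c => ¬e c < f j) (q := fun c => f j < e c)
    fun c hc => by have := hne c hc; omega, Nat.card_Icc, Nat.add_sub_cancel] at hsplit
  omega

theorem filter_lt_eq_Icc_card_of_monotoneOn {K : ℕ} (hf : MonotoneOn f (Set.Icc 1 s)) :
    {j ∈ Icc 1 s | f j < K} = Icc 1 #{j ∈ Icc 1 s | f j < K} :=
  filter_Icc_eq_Icc_card fun _ _ hi hij hjs hj =>
    (hf ⟨hi, hij.trans hjs⟩ ⟨hi.trans hij, hjs⟩ hij).trans_lt hj

theorem monotoneOn_card_filter_lt (he : MonotoneOn e (Set.Icc 1 t)) :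
    MonotoneOn (fun c => #{j ∈ Icc 1 s | f j < e c}) (Set.Icc 1 t) :=
  fun _ hc _ hc' hcc' => card_le_card <|
    monotone_filter_right _ fun _ _ hj => hj.trans_le (he hc hc' hcc')

end Interleaving

theorem first_subchain_optimal_general (n t : ℕ)
    (X Z w : ℕ → ℝ) (a : ℝ)
    (ha : a = (∑ k ∈ Finset.Icc 1 t, X k) / t)
    (hX : ∀ c, 1 ≤ c → c ≤ t → (∑ k ∈ Finset.Icc 1 c, X k) / c ≤ a)
    (hZ : ∀ j, 1 ≤ j → j ≤ n - t → (∑ k ∈ Finset.Icc 1 j, Z k) / j ≤ a)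
    (e f : ℕ → ℕ)
    (he : StrictMonoOn e (Set.Icc 1 t))
    (hf : StrictMonoOn f (Set.Icc 1 (n - t)))
    (hpart : (Finset.Icc 1 t).image e ∪ (Finset.Icc 1 (n - t)).image f = Finset.Icc 1 n)
    (hdisj : Disjoint ((Finset.Icc 1 t).image e) ((Finset.Icc 1 (n - t)).image f))
    (hwX : ∀ c, 1 ≤ c → c ≤ t → w (e c) = X c)
    (hwZ : ∀ j, 1 ≤ j → j ≤ n - t → w (f j) = Z j) :
    ∑ k ∈ Finset.Icc 1 n, ((n : ℝ) - k + 1) * w k ≤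
      ∑ c ∈ Finset.Icc 1 t, ((n : ℝ) - c + 1) * X c
        + ∑ j ∈ Finset.Icc 1 (n - t), ((n : ℝ) - (t + j) + 1) * Z j := by
  set m : ℕ → ℕ := fun c => #{j ∈ Icc 1 (n - t) | f j < e c}
  have hXterm : ∀ c ∈ Icc 1 t,
      ((n : ℝ) - e c + 1) * w (e c) = ((n : ℝ) - c + 1) * X c - m c * X c := fun c hc => by
    rw [hwX c (mem_Icc.mp hc).1 (mem_Icc.mp hc).2,
      eq_add_card_filter_lt hpart hdisj he hf.injOn hc]
    push_cast
    ring
  have hZterm : ∀ j ∈ Icc 1 (n - t), ((n : ℝ) - f j + 1) * w (f j) =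
      ((n : ℝ) - (t + j) + 1) * Z j + #{c ∈ Icc 1 t | f j < e c} * Z j := fun j hj => by
    have hfj : (f j : ℝ) = t + j - #{c ∈ Icc 1 t | f j < e c} := by
      rw [eq_sub_iff_add_eq]
      exact_mod_cast add_card_filter_gt hpart hdisj he.injOn hf hj
    rw [hfj, hwZ j (mem_Icc.mp hj).1 (mem_Icc.mp hj).2]
    ring
  have hexchange : ∑ j ∈ Icc 1 (n - t), (#{c ∈ Icc 1 t | f j < e c} : ℝ) * Z j =
      ∑ c ∈ Icc 1 t, ∑ k ∈ Icc 1 (m c), Z k := by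
    rw [sum_card_filter_mul_eq_sum_sum (fun c j => f j < e c)]
    exact sum_congr rfl fun c _ => by rw [filter_lt_eq_Icc_card_of_monotoneOn hf.monotoneOn]
  have hXt : ∑ k ∈ Icc 1 t, X k = t * a := by
    rw [ha, mul_div_cancel_of_imp' fun ht => by simp [Nat.cast_eq_zero.mp ht]]
  have hkey := sum_sum_Icc_le_sum_mul (m := m) (s := n - t)
    (monotoneOn_card_filter_lt he.monotoneOn) (fun c _ => (card_filter_le _ _).trans_eq (by simp))
    (fun c hc => sum_Icc_le_mul_of_div_le hX hc.le) hXt fun j hj => sum_Icc_le_mul_of_div_le hZ hj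
  rw [sum_Icc_eq_sum_add_sum_of_interleave hpart hdisj he.injOn hf.injOn,
    sum_congr rfl hXterm, sum_congr rfl hZterm, sum_sub_distrib, sum_add_distrib, hexchange]
  linarith

theorem first_subchain_optimal (n t : ℕ) (ht1 : 1 ≤ t) (ht : t ≤ n)
    (X Z w : ℕ → ℝ) (a : ℝ)
    (ha : a = (∑ k ∈ Finset.Icc 1 t, X k) / t)
    (hX : ∀ c, 1 ≤ c → c ≤ t → (∑ k ∈ Finset.Icc 1 c, X k) / c ≤ a)
    (hZ : ∀ j, 1 ≤ j → j ≤ n - t → (∑ k ∈ Finset.Icc 1 j, Z k) / j ≤ a)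
    (e f : ℕ → ℕ)
    (he : StrictMonoOn e (Set.Icc 1 t))
    (hf : StrictMonoOn f (Set.Icc 1 (n - t)))
    (hpart : (Finset.Icc 1 t).image e ∪ (Finset.Icc 1 (n - t)).image f = Finset.Icc 1 n)
    (hdisj : Disjoint ((Finset.Icc 1 t).image e) ((Finset.Icc 1 (n - t)).image f))
    (hwX : ∀ c, 1 ≤ c → c ≤ t → w (e c) = X c)
    (hwZ : ∀ j, 1 ≤ j → j ≤ n - t → w (f j) = Z j) :
    ∑ k ∈ Finset.Icc 1 n, ((n : ℝ) - k + 1) * w k ≤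
      ∑ c ∈ Finset.Icc 1 t, ((n : ℝ) - c + 1) * X c
        + ∑ j ∈ Finset.Icc 1 (n - t), ((n : ℝ) - (t + j) + 1) * Z j :=
  first_subchain_optimal_general n t X Z w a ha hX hZ e f he hf hpart hdisj hwX hwZ
end

section
/- Let B₁ and B₂ be two consecutive blocks of real numbers where B₂ is a 'block' in the sense that its full average ℓ_{B₂} is at least the average of every prefix of B₂. If ℓ_{B₁} ≤ ℓ_{B₂}, then for every 1 ≤ i ≤ |B₂|, the average of B₁ concatenated with the first i elements of B₂ satisfies ℓ_{B₁∪B₂(i)} ≤ ℓ_{B₁∪B₂}, with the maximum over all prefixes attained at i = |B₂| (the full concatenation). -/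
noncomputable def listMean (l : List ℝ) : ℝ := l.sum / l.length

/-!
Let `c` be the mean of `B₁ ++ B₂`. Since `ℓ_{B₁} ≤ ℓ_{B₂}`, also `c ≤ ℓ_{B₂}`. The block property
says that every prefix of `B₂` lies on average below `ℓ_{B₂}`, so the remaining suffix lies on
average above `ℓ_{B₂} ≥ c`. Removing from `B₁ ++ B₂` a suffix whose mean is at least `c` can only
lower the mean below `c`.
-/

namespace listMean

open List

theorem mul_length (l : List ℝ) : listMean l * l.length = l.sum := by
  rcases eq_or_ne l [] with rfl | hl
  · simp
  · exact div_mul_cancel₀ _ (Nat.cast_ne_zero.mpr (length_pos_iff.mpr hl).ne')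

theorem le_iff {l : List ℝ} (hl : l ≠ []) {c : ℝ} : listMean l ≤ c ↔ l.sum ≤ c * l.length :=
  div_le_iff₀ (Nat.cast_pos.mpr (length_pos_iff.mpr hl))

theorem sum_le_mul_length_of_le {l : List ℝ} {c : ℝ} (h : listMean l ≤ c) :
    l.sum ≤ c * l.length := by
  rcases eq_or_ne l [] with rfl | hl
  · simp
  · exact (le_iff hl).mp h

/-- The deviations of `p` and of `s` from the mean of `p ++ s` add up to zero. -/
theorem sum_le_mul_length_iff (p s : List ℝ) :
    p.sum ≤ listMean (p ++ s) * p.length ↔ listMean (p ++ s) * s.length ≤ s.sum := by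
  have h := mul_length (p ++ s)
  rw [sum_append, length_append, Nat.cast_add] at h
  constructor <;> intro <;> linarith

theorem append_le_right {l₁ l₂ : List ℝ} (h₂ : l₂ ≠ []) (h : listMean l₁ ≤ listMean l₂) :
    listMean (l₁ ++ l₂) ≤ listMean l₂ := by
  rw [le_iff (append_ne_nil_of_right_ne_nil l₁ h₂), sum_append, length_append, Nat.cast_add,
    ← mul_length l₂]
  linarith [sum_le_mul_length_of_le h]

theorem mul_length_drop_le_sum_drop {l : List ℝ} {i : ℕ} (h : listMean (l.take i) ≤ listMean l) :
    listMean l * (l.drop i).length ≤ (l.drop i).sum := by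
  have key := sum_le_mul_length_iff (l.take i) (l.drop i)
  rw [take_append_drop] at key
  exact key.mp (sum_le_mul_length_of_le h)

theorem le_append_of_mul_length_le_sum {p s : List ℝ} (hp : p ≠ [])
    (h : listMean (p ++ s) * s.length ≤ s.sum) : listMean p ≤ listMean (p ++ s) :=
  (le_iff hp).mpr ((sum_le_mul_length_iff p s).mpr h)

end listMean

theorem block_agglomerate_general (B₁ B₂ : List ℝ)
    (hblock : ∀ i, 1 ≤ i → i ≤ B₂.length → listMean (B₂.take i) ≤ listMean B₂)
    (hle : listMean B₁ ≤ listMean B₂) :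
    ∀ i, 1 ≤ i → i ≤ B₂.length →
      listMean (B₁ ++ B₂.take i) ≤ listMean (B₁ ++ B₂) := by
  intro i hi hil
  have htake : B₂.take i ≠ [] := by
    rw [Ne, List.take_eq_nil_iff, not_or]
    exact ⟨by omega, List.ne_nil_of_length_pos (by omega)⟩
  have hmean : listMean (B₁ ++ B₂) ≤ listMean B₂ :=
    listMean.append_le_right (List.ne_nil_of_length_pos (by omega)) hle
  have hsplit : B₁ ++ B₂ = (B₁ ++ B₂.take i) ++ B₂.drop i := by
    rw [List.append_assoc, List.take_append_drop]
  rw [hsplit]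
  refine listMean.le_append_of_mul_length_le_sum (List.append_ne_nil_of_right_ne_nil B₁ htake) ?_
  rw [← hsplit]
  exact (mul_le_mul_of_nonneg_right hmean (Nat.cast_nonneg _)).trans
    (listMean.mul_length_drop_le_sum_drop (hblock i hi hil))

theorem block_agglomerate (B₁ B₂ : List ℝ) (h₁ : B₁ ≠ []) (h₂ : B₂ ≠ [])
    (hblock : ∀ i, 1 ≤ i → i ≤ B₂.length → listMean (B₂.take i) ≤ listMean B₂)
    (hle : listMean B₁ ≤ listMean B₂) :
    ∀ i, 1 ≤ i → i ≤ B₂.length →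
      listMean (B₁ ++ B₂.take i) ≤ listMean (B₁ ++ B₂) :=
  block_agglomerate_general B₁ B₂ hblock hle
end

section
/- Let B₁ and B₂ be consecutive blocks of real numbers, where B₂ satisfies the block property (its full average dominates all its prefix averages). If ℓ_{B₁} > ℓ_{B₂}, then for every 1 ≤ i ≤ |B₂|, the average of B₁ concatenated with the first i elements of B₂ is strictly less than ℓ_{B₁}. Hence no element of B₂ joins B₁ when re-forming blocks. -/
theorem listMean_append_lt_left {l₁ l₂ : List ℝ} (h₂ : l₂ ≠ [])
    (hlt : listMean l₂ < listMean l₁) : listMean (l₁ ++ l₂) < listMean l₁ := by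
  -- `listMean [] = 0`, so for `l₁ = []` the claim is `hlt` itself.
  rcases eq_or_ne l₁ [] with rfl | h₁
  · simpa using hlt
  have hn₁ : (0 : ℝ) < l₁.length := by exact_mod_cast List.length_pos_iff.mpr h₁
  have hn₂ : (0 : ℝ) < l₂.length := by exact_mod_cast List.length_pos_iff.mpr h₂
  unfold listMean at hlt ⊢
  rw [div_lt_div_iff₀ hn₂ hn₁] at hlt
  rw [List.sum_append, List.length_append, Nat.cast_add, div_lt_div_iff₀ (by positivity) hn₁]
  linarith

theorem block_no_join_general (B₁ B₂ : List ℝ)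
    (hblock : ∀ i, 1 ≤ i → i ≤ B₂.length → listMean (B₂.take i) ≤ listMean B₂)
    (hgt : listMean B₂ < listMean B₁) :
    ∀ i, 1 ≤ i → i ≤ B₂.length →
      listMean (B₁ ++ B₂.take i) < listMean B₁ := by
  intro i hi₁ hi₂
  have hprefix : B₂.take i ≠ [] := by
    rw [← List.length_pos_iff, List.length_take]
    omega
  exact listMean_append_lt_left hprefix ((hblock i hi₁ hi₂).trans_lt hgt)

theorem block_no_join (B₁ B₂ : List ℝ) (h₁ : B₁ ≠ []) (h₂ : B₂ ≠ [])
    (hblock : ∀ i, 1 ≤ i → i ≤ B₂.length → listMean (B₂.take i) ≤ listMean B₂)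
    (hgt : listMean B₂ < listMean B₁) :
    ∀ i, 1 ≤ i → i ≤ B₂.length →
      listMean (B₁ ++ B₂.take i) < listMean B₁ :=
  block_no_join_general B₁ B₂ hblock hgt
end

section
/- Let x_1, ..., x_n be any real sequence. Define breaking points recursively: p₁ is the largest index maximizing the prefix average (1/i)∑_{k=1}^i x_k over 1 ≤ i ≤ n, and p_{j+1} is the largest index i > p_j maximizing the average of x_{p_j+1},...,x_i. Then the resulting block averages are strictly decreasing: the average of block j+1 is strictly less than the average of block j. -/
/-!
The average over `(p, r]` is the length-weighted mean of the averages over `(p, q]` and `(q, r]`.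
Since `q` is the largest maximiser, the average over `(p, r]` is strictly below that over `(p, q]`,
so the average over `(q, r]` must be strictly below it as well.
-/

/-- Average of the segment `x_{a+1}, ..., x_b`. -/
noncomputable def segAvg (x : ℕ → ℝ) (a b : ℕ) : ℝ :=
  (∑ k ∈ Finset.Ioc a b, x k) / ((b : ℝ) - a)

open Finset

theorem segAvg_mul_sub (x : ℕ → ℝ) (a b : ℕ) :
    segAvg x a b * ((b : ℝ) - a) = ∑ k ∈ Ioc a b, x k := by
  rcases lt_or_ge a b with hab | hba
  · have : ((b : ℝ) - a) ≠ 0 := sub_ne_zero.mpr (by exact_mod_cast hab.ne')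
    exact div_mul_cancel₀ _ this
  · simp [segAvg, Ioc_eq_empty_of_le hba]

theorem segAvg_mul_sub_add {a b c : ℕ} (x : ℕ → ℝ) (hab : a ≤ b) (hbc : b ≤ c) :
    segAvg x a c * ((c : ℝ) - a) =
      segAvg x a b * ((b : ℝ) - a) + segAvg x b c * ((c : ℝ) - b) := by
  simp only [segAvg_mul_sub, sum_Ioc_consecutive _ hab hbc]

theorem segAvg_right_lt_of_lt {a b c : ℕ} {x : ℕ → ℝ} (hab : a ≤ b) (hbc : b < c)
    (h : segAvg x a c < segAvg x a b) : segAvg x b c < segAvg x a b := by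
  by_contra! hle
  have hab' : (a : ℝ) ≤ b := by exact_mod_cast hab
  have hbc' : (b : ℝ) < c := by exact_mod_cast hbc
  have hsplit := segAvg_mul_sub_add x hab hbc.le
  have : segAvg x a b * ((c : ℝ) - a) ≤ segAvg x a c * ((c : ℝ) - a) := by
    rw [hsplit]; nlinarith
  exact h.not_ge (le_of_mul_le_mul_right this (by linarith))

theorem block_averages_strict_decreasing_general (x : ℕ → ℝ) (n p q r : ℕ)
    (hpq : p < q) (hqr : q < r) (hrn : r ≤ n)
    (hqlargest : ∀ i, q < i → i ≤ n → segAvg x p i < segAvg x p q) :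
    segAvg x q r < segAvg x p q :=
  segAvg_right_lt_of_lt hpq.le hqr (hqlargest r hqr hrn)

theorem block_averages_strict_decreasing (x : ℕ → ℝ) (n p q r : ℕ)
    (hpq : p < q) (hqn : q ≤ n) (hqr : q < r) (hrn : r ≤ n)
    (hqmax : ∀ i, p < i → i ≤ n → segAvg x p i ≤ segAvg x p q)
    (hqlargest : ∀ i, q < i → i ≤ n → segAvg x p i < segAvg x p q)
    (hrmax : ∀ i, q < i → i ≤ n → segAvg x q i ≤ segAvg x q r) :
    segAvg x q r < segAvg x p q :=
  block_averages_strict_decreasing_general x n p q r hpq hqr hrn hqlargest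
end
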